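/- Monotonicity in supply: consider two instances on the same objects Ω, buyers N, demands d and valuations v, with supply vectors b and b_new satisfying b_new i ≤ b i for all i ∈ Ω. Let p be a componentwise minimum Walrasian price vector for supplies b and p_new one for supplies b_new. Then p(i) ≤ p_new(i) for every object i with b_new i > 0. -/

import Mathlib

/-!
Let `x` be a Walrasian allocation at `p` that sells out every object of positive price, and let
`q i = min (p i) (pnew i)` where `bnew i > 0`, `q i = p i` elsewhere. Each buyer has a bundle
demanded at `q` which, on the objects whose price dropped to `pnew`, takes no more than the
buyer's Walrasian bundle at `pnew` unless that bundle already holds all `bnew i` units. So the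
buyers together ask for at most `b i` units of such an object, which is what `x` sells; comparing
total utilities at `q`, `x` stays stable at `q`. Hence `q` is Walrasian and `p ≤ q ≤ pnew` where
`bnew > 0`.

The sold-out allocation exists by minimality of `p`: take a Walrasian allocation of maximal
revenue, and suppose an object `a` with `p a > 0` is not sold out. If a chain of indifferent swaps
by buyers leads from `a` to an object of price `0`, shifting one unit along it raises revenue;
otherwise the prices of all objects reachable from `a` can be lowered slightly, keeping `x` stable.
-/

open Finset

section MarketDefs

variable {Ω N : Type*}

/-- A bundle for a buyer with demand `dj`: at most `b i` copies of each object,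
at most `dj` items in total. -/
def IsBundle [Fintype Ω] (b : Ω → ℕ) (dj : ℕ) (y : Ω → ℕ) : Prop :=
  (∀ i, y i ≤ b i) ∧ ∑ i, y i ≤ dj

/-- Utility of bundle `y` at prices `p` for a buyer with per-unit valuations `v`. -/
noncomputable def utility [Fintype Ω] (v : Ω → ℕ) (p : Ω → ℝ) (y : Ω → ℕ) : ℝ :=
  ∑ i, ((v i : ℝ) - p i) * (y i : ℝ)

/-- `y` is a preferred bundle (member of the demand set `D_j(p)`). -/
def InDemand [Fintype Ω] (b : Ω → ℕ) (dj : ℕ) (v : Ω → ℕ) (p : Ω → ℝ) (y : Ω → ℕ) : Prop :=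
  IsBundle b dj y ∧ ∀ z, IsBundle b dj z → utility v p z ≤ utility v p y

/-- Feasible allocation. -/
def Feasible [Fintype Ω] [Fintype N] (b : Ω → ℕ) (d : N → ℕ) (x : Ω → N → ℕ) : Prop :=
  (∀ i, ∑ j, x i j ≤ b i) ∧ ∀ j, ∑ i, x i j ≤ d j

/-- Stable allocation at prices `p`: feasible, and every buyer gets a preferred bundle. -/
def Stable [Fintype Ω] [Fintype N] (b : Ω → ℕ) (d : N → ℕ) (v : Ω → N → ℕ)
    (p : Ω → ℝ) (x : Ω → N → ℕ) : Prop :=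
  Feasible b d x ∧ ∀ j, InDemand b (d j) (fun i => v i j) p (fun i => x i j)

/-- Competitive price vector: nonnegative, and some allocation is stable for it. -/
def Competitive [Fintype Ω] [Fintype N] (b : Ω → ℕ) (d : N → ℕ) (v : Ω → N → ℕ)
    (p : Ω → ℝ) : Prop :=
  (∀ i, 0 ≤ p i) ∧ ∃ x, Stable b d v p x

/-- Walrasian price vector: some stable allocation sells as much as possible. -/
def Walrasian [Fintype Ω] [Fintype N] (b : Ω → ℕ) (d : N → ℕ) (v : Ω → N → ℕ)
    (p : Ω → ℝ) : Prop :=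
  (∀ i, 0 ≤ p i) ∧ ∃ x, Stable b d v p x ∧
    ∑ i, ∑ j, x i j = min (∑ i, b i) (∑ j, d j)

/-- Componentwise minimum Walrasian price vector. -/
def MinWalrasian [Fintype Ω] [Fintype N] (b : Ω → ℕ) (d : N → ℕ) (v : Ω → N → ℕ)
    (p : Ω → ℝ) : Prop :=
  Walrasian b d v p ∧ ∀ q, Walrasian b d v q → ∀ i, p i ≤ q i

end MarketDefs


section SingleUnits

variable {ι M : Type*} [DecidableEq ι] [AddCommMonoid M] [PartialOrder M] [CanonicallyOrderedAdd M]

lemma Pi.single_le_of_le {f : ι → M} {i : ι} {u : M} (h : u ≤ f i) : Pi.single i u ≤ f := by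
  intro j
  rcases eq_or_ne j i with rfl | hj <;> simp [*]

lemma exists_add_single_eq_add_single [Sub M] [OrderedSub M] {f : ι → M} {c : ι} {u : M}
    (h : u ≤ f c) (a : ι) : ∃ g : ι → M, g + Pi.single c u = f + Pi.single a u :=
  ⟨f - Pi.single c u + Pi.single a u, by
    rw [add_right_comm, tsub_add_cancel_of_le (Pi.single_le_of_le h)]⟩

lemma le_of_add_single_eq_add_single {f g : ι → M} {c a i : ι} {u : M}
    (h : g + Pi.single c u = f + Pi.single a u) (hi : i ≠ a) : g i ≤ f i := by
  simpa [hi] using (le_self_add (a := g i)).trans_eq (congrFun h i)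

lemma ge_of_add_single_eq_add_single {f g : ι → M} {c a i : ι} {u : M}
    (h : g + Pi.single c u = f + Pi.single a u) (hi : i ≠ c) : f i ≤ g i := by
  simpa [hi] using (le_self_add (a := f i)).trans_eq (congrFun h i).symm

end SingleUnits

theorem List.exists_nodup_isChain_cons_of_relationReflTransGen {α : Type*} {r : α → α → Prop}
    {a b : α} (h : Relation.ReflTransGen r a b) :
    ∃ l, IsChain r (a :: l) ∧ (a :: l).getLast (cons_ne_nil a l) = b ∧ (a :: l).Nodup := by
  refine Relation.ReflTransGen.head_induction_on h ⟨[], .singleton _, rfl, nodup_singleton _⟩ ?_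
  rintro a c hac - ⟨l, hl, hlast, hnd⟩
  by_cases ha : a ∈ c :: l
  · obtain ⟨s, t, hst⟩ := append_of_mem ha
    have hsuffix : a :: t <:+ c :: l := hst ▸ suffix_append s (a :: t)
    refine ⟨t, hl.suffix hsuffix, ?_, hnd.sublist hsuffix.sublist⟩
    rw [← hlast]
    simp only [hst]
    exact (getLast_append_of_ne_nil _ (cons_ne_nil a t)).symm
  · exact ⟨c :: l, .cons_cons hac hl, by rwa [getLast_cons_cons], nodup_cons.2 ⟨ha, hnd⟩⟩

lemma sum_le_of_forall_lt_imp_le {ι : Type*} [Fintype ι] {f g : ι → ℕ} {c C : ℕ} (hc : 0 < c)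
    (hcC : c ≤ C) (hf : ∑ j, f j ≤ c) (hg : ∀ j, g j ≤ C) (h : ∀ j, f j < c → g j ≤ f j) :
    ∑ j, g j ≤ C := by
  by_cases hsat : ∃ j₀, c ≤ f j₀
  · classical
    obtain ⟨j₀, hj₀⟩ := hsat
    have hzero : ∀ j, j ≠ j₀ → f j = 0 := fun j hj => by
      have := (sum_pair (f := f) hj).symm.trans_le (sum_le_sum_of_subset (subset_univ {j, j₀}))
      omega
    have hothers : ∀ j, j ≠ j₀ → g j = 0 := fun j hj => by
      simpa [hzero j hj] using h j (by rw [hzero j hj]; exact hc)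
    rw [sum_eq_single j₀ (fun j _ hj => hothers j hj) (by simp)]
    exact hg j₀
  · push Not at hsat
    exact (sum_le_sum fun j _ => h j (hsat j)).trans (hf.trans hcC)

section Demand

variable {Ω : Type*} [Fintype Ω]

lemma utility_add (v : Ω → ℕ) (p : Ω → ℝ) (y z : Ω → ℕ) :
    utility v p (y + z) = utility v p y + utility v p z := by
  simp only [utility, Pi.add_apply, Nat.cast_add, mul_add, sum_add_distrib]

lemma utility_eq_add_sum_sub_mul (v : Ω → ℕ) (p q : Ω → ℝ) (y : Ω → ℕ) :
    utility v q y = utility v p y + ∑ i, (p i - q i) * y i := by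
  simp only [utility, ← sum_add_distrib]
  exact sum_congr rfl fun i _ => by ring

variable {b : Ω → ℕ} {dj : ℕ} {v : Ω → ℕ} {p : Ω → ℝ} {y z : Ω → ℕ}

lemma InDemand.of_utility_le (hy : InDemand b dj v p y) (hz : IsBundle b dj z)
    (h : utility v p y ≤ utility v p z) : InDemand b dj v p z :=
  ⟨hz, fun w hw => (hy.2 w hw).trans h⟩

lemma exists_inDemand_forall_le (b : Ω → ℕ) (dj : ℕ) (v : Ω → ℕ) (p : Ω → ℝ)
    (Φ : (Ω → ℕ) → ℕ) : ∃ y, InDemand b dj v p y ∧ ∀ z, InDemand b dj v p z → Φ y ≤ Φ z := by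
  have hfin : {y | IsBundle b dj y}.Finite :=
    (Set.Finite.pi (t := fun i => Set.Iic (b i)) fun i => Set.finite_Iic _).subset
      fun y hy i _ => hy.1 i
  obtain ⟨y₀, hy₀, hmax⟩ :=
    Set.exists_max_image _ (utility v p) hfin ⟨0, fun i => Nat.zero_le _, by simp⟩
  obtain ⟨y, hy, hmin⟩ :=
    Set.exists_min_image {y | InDemand b dj v p y} Φ (hfin.subset fun y hy => hy.1) ⟨y₀, hy₀, hmax⟩
  exact ⟨y, hy, hmin⟩

/- A threshold `t ≥ 0` separates the margins of the held objects from those of the objects with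
room left (`t = 0` if the buyer has room left); against `t`, `utility z - utility y` splits into
non-positive terms. -/
lemma inDemand_of_margins (hy : IsBundle b dj y)
    (hheld : ∀ c, 0 < y c → 0 ≤ (v c : ℝ) - p c)
    (hfree : ∑ i, y i < dj → ∀ a, y a < b a → (v a : ℝ) - p a ≤ 0)
    (hswap : ∀ c a, 0 < y c → y a < b a → (v a : ℝ) - p a ≤ v c - p c) :
    InDemand b dj v p y := by
  classical
  set m : Ω → ℝ := fun i => v i - p i
  set T := insert 0 ((univ.filter fun a => y a < b a).image m)
  set t := T.max' (insert_nonempty _ _)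
  have ht0 : 0 ≤ t := T.le_max' 0 (mem_insert_self _ _)
  have hfree_t : ∀ a, y a < b a → m a ≤ t := fun a ha =>
    T.le_max' _ (mem_insert_of_mem (mem_image_of_mem m (by simpa using ha)))
  have hheld_t : ∀ c, 0 < y c → t ≤ m c := fun c hc => T.max'_le _ _ fun r hr => by
    simp only [T, mem_insert, mem_image, mem_filter, mem_univ, true_and] at hr
    rcases hr with rfl | ⟨a, ha, rfl⟩
    exacts [hheld c hc, hswap c a hc ha]
  have hslack_t : ∑ i, y i < dj → t = 0 := fun hs => le_antisymm (T.max'_le _ _ fun r hr => by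
    simp only [T, mem_insert, mem_image, mem_filter, mem_univ, true_and] at hr
    rcases hr with rfl | ⟨a, ha, rfl⟩
    exacts [le_rfl, hfree hs a ha]) ht0
  refine ⟨hy, fun z hz => ?_⟩
  have hsplit : utility v p z - utility v p y
      = ∑ i, (m i - t) * ((z i : ℝ) - y i) + t * (∑ i, (z i : ℝ) - ∑ i, (y i : ℝ)) := by
    simp only [utility, mul_sub, mul_sum, ← sum_sub_distrib, ← sum_add_distrib]
    exact sum_congr rfl fun i _ => by ring
  have hterm : ∀ i, (m i - t) * ((z i : ℝ) - y i) ≤ 0 := fun i => by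
    rcases lt_trichotomy (z i) (y i) with h | h | h
    · exact mul_nonpos_of_nonneg_of_nonpos (by linarith [hheld_t i (by omega)])
        (by linarith [(Nat.cast_lt (α := ℝ)).2 h])
    · simp [h]
    · exact mul_nonpos_of_nonpos_of_nonneg (by linarith [hfree_t i (h.trans_le (hz.1 i))])
        (by linarith [(Nat.cast_lt (α := ℝ)).2 h])
  have htotal : t * (∑ i, (z i : ℝ) - ∑ i, (y i : ℝ)) ≤ 0 := by
    by_cases hs : ∑ i, y i < dj
    · simp [hslack_t hs]
    · refine mul_nonpos_of_nonneg_of_nonpos ht0 (sub_nonpos.2 ?_)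
      exact_mod_cast hz.2.trans (not_lt.1 hs)
  linarith [sum_nonpos fun i (_ : i ∈ univ) => hterm i]

variable [DecidableEq Ω]

lemma utility_single (v : Ω → ℕ) (p : Ω → ℝ) (i : Ω) :
    utility v p (Pi.single i 1) = v i - p i := by
  simp [utility, Pi.single_apply]

lemma IsBundle.of_add_single_eq_add_single {c a : Ω} (hy : IsBundle b dj y) (ha : y a < b a)
    (h : z + Pi.single c 1 = y + Pi.single a 1) : IsBundle b dj z := by
  refine ⟨fun i => ?_, ?_⟩
  · have hi := congrFun h i
    have := hy.1 i
    simp only [Pi.add_apply, Pi.single_apply] at hi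
    split_ifs at hi <;> subst_vars <;> omega
  · have := congrArg (fun w => ∑ i, w i) h
    simp only [Pi.add_apply, sum_add_distrib, sum_pi_single', mem_univ, if_true] at this
    have := hy.2
    omega

lemma IsBundle.of_add_single_eq {c : Ω} (hy : IsBundle b dj y)
    (h : z + Pi.single c 1 = y) : IsBundle b dj z := by
  refine ⟨fun i => ?_, ?_⟩
  · have := congrFun h i
    have := hy.1 i
    simp only [Pi.add_apply] at *
    omega
  · have := congrArg (fun w => ∑ i, w i) h
    simp only [Pi.add_apply, sum_add_distrib, sum_pi_single', mem_univ, if_true] at this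
    have := hy.2
    omega

lemma IsBundle.add_single {a : Ω} (hy : IsBundle b dj y) (ha : y a < b a)
    (hs : ∑ i, y i < dj) : IsBundle b dj (y + Pi.single a 1) := by
  refine ⟨fun i => ?_, ?_⟩
  · have := hy.1 i
    rcases eq_or_ne i a with rfl | hi <;> simp [*]
  · simpa [sum_add_distrib] using hs

lemma InDemand.margin_nonneg {c : Ω} (hy : InDemand b dj v p y) (hc : 0 < y c) :
    0 ≤ (v c : ℝ) - p c := by
  have h : y - Pi.single c 1 + Pi.single c 1 = y := tsub_add_cancel_of_le (Pi.single_le_of_le hc)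
  have := hy.2 _ (hy.1.of_add_single_eq h)
  have := congrArg (utility v p) h
  rw [utility_add, utility_single] at this
  linarith

lemma InDemand.margin_nonpos {a : Ω} (hy : InDemand b dj v p y) (ha : y a < b a)
    (hs : ∑ i, y i < dj) : (v a : ℝ) - p a ≤ 0 := by
  have := hy.2 _ (hy.1.add_single ha hs)
  rw [utility_add, utility_single] at this
  linarith

lemma InDemand.margin_le {c a : Ω} (hy : InDemand b dj v p y) (hc : 0 < y c) (ha : y a < b a) :
    (v a : ℝ) - p a ≤ v c - p c := by
  obtain ⟨z, h⟩ := exists_add_single_eq_add_single (f := y) (u := 1) hc a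
  have := hy.2 z (hy.1.of_add_single_eq_add_single ha h)
  have := congrArg (utility v p) h
  simp only [utility_add, utility_single] at this
  linarith

end Demand

section Allocations

variable {Ω N : Type*} {b : Ω → ℕ} {d : N → ℕ} {v : Ω → N → ℕ} {p : Ω → ℝ} {x x' : Ω → N → ℕ}

def Exchangeable (b : Ω → ℕ) (v : Ω → N → ℕ) (p : Ω → ℝ) (x : Ω → N → ℕ) (a c : Ω) : Prop :=
  ∃ j, x a j < b a ∧ 0 < x c j ∧ (v a j : ℝ) - p a = v c j - p c

lemma Exchangeable.mono {a c : Ω} (h : Exchangeable b v p x a c) (ha : ∀ j, x' a j ≤ x a j)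
    (hc : ∀ j, x c j ≤ x' c j) : Exchangeable b v p x' a c :=
  let ⟨j, hja, hjc, htie⟩ := h
  ⟨j, (ha j).trans_lt hja, hjc.trans_le (hc j), htie⟩

variable [Fintype Ω] [Fintype N]

def WalrasianAlloc (b : Ω → ℕ) (d : N → ℕ) (v : Ω → N → ℕ) (p : Ω → ℝ) (x : Ω → N → ℕ) : Prop :=
  Stable b d v p x ∧ ∑ i, ∑ j, x i j = min (∑ i, b i) (∑ j, d j)

def revenue (p : Ω → ℝ) (x : Ω → N → ℕ) : ℝ :=
  ∑ i, ∑ j, p i * x i j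

lemma WalrasianAlloc.buyers_full {a : Ω} (hx : WalrasianAlloc b d v p x)
    (ha : ∑ j, x a j < b a) (j : N) : ∑ i, x i j = d j := by
  have hsold : ∑ i, ∑ j, x i j < ∑ i, b i :=
    sum_lt_sum (fun i _ => hx.1.1.1 i) ⟨a, mem_univ a, ha⟩
  have htotal : ∑ j, ∑ i, x i j = ∑ j, d j := by
    rw [sum_comm, hx.2, min_eq_right]
    rw [hx.2] at hsold
    exact (min_lt_iff.1 hsold).resolve_left (lt_irrefl _) |>.le
  exact (sum_eq_sum_iff_of_le fun j _ => hx.1.1.2 j).1 htotal j (mem_univ j)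

lemma revenue_add (p : Ω → ℝ) (x y : Ω → N → ℕ) :
    revenue p (x + y) = revenue p x + revenue p y := by
  simp only [revenue, Pi.add_apply, Nat.cast_add, mul_add, sum_add_distrib]

variable [DecidableEq Ω] [DecidableEq N]

lemma revenue_single (p : Ω → ℝ) (a : Ω) (j : N) :
    revenue p (Pi.single a (Pi.single j 1)) = p a := by
  simp [revenue, Pi.single_apply, ite_apply]

lemma WalrasianAlloc.exchange {a c : Ω} {j : N} (hx : WalrasianAlloc b d v p x)
    (ha : ∑ k, x a k < b a) (hc : 0 < x c j) (htie : (v a j : ℝ) - p a = v c j - p c)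
    (h : x' + Pi.single c (Pi.single j 1) = x + Pi.single a (Pi.single j 1)) :
    WalrasianAlloc b d v p x' := by
  obtain ⟨⟨⟨hrows, hcols⟩, hdemand⟩, hsold⟩ := hx
  have hrow : ∀ i, (∑ k, x' i k + if i = c then 1 else 0) = ∑ k, x i k + if i = a then 1 else 0 :=
    fun i => by
      simpa [sum_add_distrib, Pi.single_apply, apply_ite (fun f : N → ℕ => ∑ k, f k)] using
        congrArg (fun z => ∑ k, z i k) h
  have hcol : ∀ k, ∑ i, x' i k = ∑ i, x i k := fun k => by
    simpa [sum_add_distrib, Pi.single_apply, ite_apply] using congrArg (fun z => ∑ i, z i k) h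
  have hentry : ∀ i k, (x' i k + if i = c then if k = j then 1 else 0 else 0)
      = x i k + if i = a then if k = j then 1 else 0 else 0 := fun i k => by
    simpa [Pi.single_apply, apply_ite (fun f : N → ℕ => f k)] using congrFun (congrFun h i) k
  have hbuyer : ∀ k, k ≠ j → (fun i => x' i k) = fun i => x i k := fun k hk =>
    funext fun i => by simpa [hk] using hentry i k
  have hbuyer_j : (fun i => x' i j) + Pi.single c 1 = (fun i => x i j) + Pi.single a 1 :=
    funext fun i => by simpa [Pi.single_apply] using hentry i j
  refine ⟨⟨⟨fun i => ?_, fun k => hcol k ▸ hcols k⟩, fun k => ?_⟩, ?_⟩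
  · have := hrow i
    have := hrows i
    split_ifs at * <;> subst_vars <;> omega
  · rcases eq_or_ne k j with rfl | hk
    · have hbundle := (hdemand k).1.of_add_single_eq_add_single
        ((single_le_sum (fun k _ => Nat.zero_le (x a k)) (mem_univ _)).trans_lt ha) hbuyer_j
      refine (hdemand k).of_utility_le hbundle (le_of_eq ?_)
      have := congrArg (utility (fun i => v i k) p) hbuyer_j
      simp only [utility_add, utility_single] at this
      linarith
    · exact hbuyer k hk ▸ hdemand k
  · rw [sum_comm, sum_congr rfl fun k _ => hcol k, sum_comm, hsold]

end Allocations

section MinimalPrices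

open Filter Topology

variable {Ω N : Type*} [Fintype Ω] [Fintype N] {b : Ω → ℕ} {d : N → ℕ} {v : Ω → N → ℕ}
  {p : Ω → ℝ} {x : Ω → N → ℕ}

lemma exists_walrasianAlloc_revenue_eq_of_isChain [DecidableEq Ω] [DecidableEq N] (l : List Ω)
    {a : Ω} (hx : WalrasianAlloc b d v p x) (ha : ∑ k, x a k < b a) (hnd : (a :: l).Nodup)
    (hchain : (a :: l).IsChain (Exchangeable b v p x)) :
    ∃ x', WalrasianAlloc b d v p x' ∧
      revenue p x' = revenue p x + p a - p ((a :: l).getLast (List.cons_ne_nil a l)) := by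
  induction l generalizing a x with
  | nil => exact ⟨x, hx, by simp⟩
  | cons c l ih =>
    obtain ⟨⟨j, -, hc, htie⟩, hchain⟩ := List.isChain_cons_cons.1 hchain
    obtain ⟨ha_l, hnd⟩ := List.nodup_cons.1 hnd
    have hc_l : c ∉ l := (List.nodup_cons.1 hnd).1
    have hac : c ≠ a := fun h => ha_l (h ▸ List.mem_cons_self)
    obtain ⟨x', h⟩ := exists_add_single_eq_add_single (f := x) (u := Pi.single j 1)
      (Pi.single_le_of_le hc) a
    have hc' : ∑ k, x' c k < b c := by
      have := congrArg (fun f : N → ℕ => ∑ k, f k) (congrFun h c)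
      simp only [Pi.add_apply, Pi.single_eq_same, Pi.single_eq_of_ne hac, Pi.zero_apply,
        sum_add_distrib, sum_pi_single', mem_univ, if_true, add_zero] at this
      have := hx.1.1.1 c
      omega
    have hchain' : (c :: l).IsChain (Exchangeable b v p x') :=
      hchain.imp_of_mem_tail_imp fun i k hi hk hik =>
        hik.mono (le_of_add_single_eq_add_single h fun hia => ha_l (hia ▸ hi))
          (ge_of_add_single_eq_add_single h fun hkc => hc_l (hkc ▸ hk))
    obtain ⟨x'', hx'', hrev⟩ := ih (hx.exchange ha hc htie h) hc' hnd hchain'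
    have := congrArg (revenue p) h
    simp only [revenue_add, revenue_single] at this
    exact ⟨x'', hx'', by rw [hrev, List.getLast_cons_cons]; linarith⟩

/- Closedness of `S` makes every comparison between the margin of an object of `S` with room and
that of a held object outside `S` strict, so a small enough cut of the prices on `S` is harmless. -/
lemma Stable.exists_lower_on (hx : Stable b d v p x) (hfull : ∀ j, ∑ i, x i j = d j)
    {S : Set Ω} (hS : ∀ a c, a ∈ S → Exchangeable b v p x a c → c ∈ S)
    (hpos : ∀ i ∈ S, 0 < p i) :
    ∃ q : Ω → ℝ, (∀ i, i ∉ S → q i = p i) ∧ (∀ i ∈ S, 0 ≤ q i ∧ q i < p i) ∧ Stable b d v q x := by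
  classical
  have hgap : ∀ j a c, a ∈ S → c ∉ S → x a j < b a → 0 < x c j →
      0 < ((v c j : ℝ) - p c) - (v a j - p a) := fun j a c haS hcS ha hc =>
    sub_pos.2 <| lt_of_le_of_ne ((hx.2 j).margin_le hc ha)
      fun htie => hcS (hS a c haS ⟨j, ha, hc, htie⟩)
  obtain ⟨ε, ⟨hεp, hεgap⟩, hε⟩ : ∃ ε : ℝ, ((∀ i ∈ S, ε < p i) ∧ ∀ j a c, a ∈ S → c ∉ S →
      x a j < b a → 0 < x c j → ε ≤ ((v c j : ℝ) - p c) - (v a j - p a)) ∧ 0 < ε := by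
    refine (Eventually.and ?_ self_mem_nhdsWithin).exists (f := 𝓝[>] (0 : ℝ))
    refine (eventually_all.2 fun i => ?_).and (eventually_all.2 fun j =>
      eventually_all.2 fun a => eventually_all.2 fun c => ?_)
    · exact eventually_imp_distrib_left.2 fun hi =>
        nhdsWithin_le_nhds (eventually_lt_nhds (hpos i hi))
    · simp only [eventually_imp_distrib_left]
      exact fun haS hcS ha hc => nhdsWithin_le_nhds
        ((eventually_lt_nhds (hgap j a c haS hcS ha hc)).mono fun _ => le_of_lt)
  refine ⟨fun i => p i - S.indicator (fun _ => ε) i, fun i hi => by simp [hi],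
    fun i hi => by simp only [Set.indicator_of_mem hi]; constructor <;> linarith [hεp i hi],
    hx.1, fun j => inDemand_of_margins (hx.2 j).1 ?_ ?_ ?_⟩
  · intro c hc
    have := (hx.2 j).margin_nonneg hc
    have : 0 ≤ S.indicator (fun _ => ε) c := Set.indicator_nonneg (fun _ _ => hε.le) c
    linarith
  · exact fun hs => absurd (hfull j) hs.ne
  · intro c a hc ha
    have := (hx.2 j).margin_le hc ha
    by_cases haS : a ∈ S <;> by_cases hcS : c ∈ S <;>
      simp only [Set.indicator, haS, hcS, if_true, if_false]
    · linarith
    · linarith [hεgap j a c haS hcS ha hc]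
    · linarith
    · linarith

lemma exists_walrasianAlloc_forall_revenue_le (h : ∃ x, WalrasianAlloc b d v p x) :
    ∃ x, WalrasianAlloc b d v p x ∧
      ∀ x', WalrasianAlloc b d v p x' → revenue p x' ≤ revenue p x := by
  have hfin : {x | WalrasianAlloc b d v p x}.Finite :=
    (Set.Finite.pi (t := fun i => Set.univ.pi fun _ => Set.Iic (b i)) fun i =>
      Set.Finite.pi fun _ => Set.finite_Iic _).subset fun x hx i _ j _ =>
        (single_le_sum (fun k _ => Nat.zero_le (x i k)) (mem_univ j)).trans (hx.1.1.1 i)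
  obtain ⟨x, hx, hmax⟩ := Set.exists_max_image _ (revenue p) hfin h
  exact ⟨x, hx, hmax⟩

theorem MinWalrasian.exists_walrasianAlloc_sold_out (hp : MinWalrasian b d v p) :
    ∃ x, WalrasianAlloc b d v p x ∧ ∀ i, 0 < p i → ∑ j, x i j = b i := by
  classical
  obtain ⟨x, hx, hmax⟩ := exists_walrasianAlloc_forall_revenue_le hp.1.2
  refine ⟨x, hx, fun a hpa => (hx.1.1.1 a).eq_of_not_lt fun ha => ?_⟩
  by_cases hzero : ∃ s, Relation.ReflTransGen (Exchangeable b v p x) a s ∧ p s = 0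
  · obtain ⟨s, hs, hps⟩ := hzero
    obtain ⟨l, hchain, hlast, hnd⟩ := List.exists_nodup_isChain_cons_of_relationReflTransGen hs
    obtain ⟨x', hx', hrev⟩ := exists_walrasianAlloc_revenue_eq_of_isChain l hx ha hnd hchain
    rw [hlast, hps] at hrev
    linarith [hmax x' hx']
  · set S := {s | Relation.ReflTransGen (Exchangeable b v p x) a s}
    obtain ⟨q, hqS, hqlt, hqx⟩ := hx.1.exists_lower_on (hx.buyers_full ha) (S := S)
      (fun _ _ has hac => Relation.ReflTransGen.tail has hac)
      fun s hs => (hp.1.1 s).lt_of_ne' fun h => hzero ⟨s, hs, h⟩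
    have hqW : Walrasian b d v q := ⟨fun i => by
      by_cases hi : i ∈ S
      exacts [(hqlt i hi).1, hqS i hi ▸ hp.1.1 i], x, hqx, hx.2⟩
    linarith [hp.2 q hqW a, (hqlt a Relation.ReflTransGen.refl).2]

end MinimalPrices

section Monotonicity

variable {Ω N : Type*} [Fintype Ω] [Fintype N]

/- Take a bundle demanded at `q` with least excess over `y'` on the objects concerned. An excess
unit of such an object could be dropped (if `y'` leaves room) or swapped for an object of which
`y'` holds more, without loss at `q`: the margins at `p'` say so, and `q ≤ p'` where `b' > 0`. -/
lemma InDemand.exists_inDemand_le {b b' : Ω → ℕ} (hb : ∀ i, b' i ≤ b i) {p' q : Ω → ℝ}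
    (hq : ∀ i, 0 < b' i → q i ≤ p' i) {dj : ℕ} {w y' : Ω → ℕ} (hy' : InDemand b' dj w p' y') :
    ∃ y, InDemand b dj w q y ∧ ∀ i, q i = p' i → y' i < b' i → y i ≤ y' i := by
  classical
  set U := univ.filter fun i => q i = p' i ∧ y' i < b' i
  obtain ⟨y, hy, hmin⟩ := exists_inDemand_forall_le b dj w q fun z => ∑ i ∈ U, (z i - y' i)
  refine ⟨y, hy, fun i₀ hq₀ hlt₀ => not_lt.1 fun hgt => ?_⟩
  have hdecr : ∀ z, InDemand b dj w q z → (∀ i, z i ≤ y i ∨ z i ≤ y' i) → z i₀ < y i₀ → False :=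
    fun z hz hle hlt => by
      have := hmin z hz
      have : ∑ i ∈ U, (z i - y' i) < ∑ i ∈ U, (y i - y' i) :=
        sum_lt_sum (fun i _ => by rcases hle i with h | h <;> omega)
          ⟨i₀, by simp [U, hq₀, hlt₀], by omega⟩
      omega
  by_cases hs : ∑ i, y' i < dj
  · have hm := hy'.margin_nonpos hlt₀ hs
    have hrem : y - Pi.single i₀ 1 + Pi.single i₀ 1 = y :=
      tsub_add_cancel_of_le (Pi.single_le_of_le (by omega))
    have hutil := congrArg (utility w q) hrem
    rw [utility_add, utility_single] at hutil
    refine hdecr _ (hy.of_utility_le (hy.1.of_add_single_eq hrem) (by linarith))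
      (fun i => Or.inl (by simp)) ?_
    simp only [Pi.sub_apply, Pi.single_eq_same]
    omega
  · obtain ⟨k, hk⟩ : ∃ k, y k < y' k := by
      by_contra! h
      have := sum_lt_sum (fun i _ => h i) ⟨i₀, mem_univ _, hgt⟩
      have := hy.1.2
      omega
    have hki₀ : k ≠ i₀ := by rintro rfl; omega
    have hm := hy'.margin_le (c := k) (by omega) hlt₀
    have hqk := hq k ((Nat.zero_le _).trans_lt (hk.trans_le (hy'.1.1 k)))
    obtain ⟨z, hz⟩ := exists_add_single_eq_add_single (f := y) (u := 1) (c := i₀) (by omega) k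
    have hutil := congrArg (utility w q) hz
    simp only [utility_add, utility_single] at hutil
    have hzk := congrFun hz k
    have hzi₀ := congrFun hz i₀
    simp only [Pi.add_apply, Pi.single_eq_same, Pi.single_eq_of_ne hki₀,
      Pi.single_eq_of_ne hki₀.symm] at hzk hzi₀
    refine hdecr z (hy.of_utility_le (hy.1.of_add_single_eq_add_single
      (hk.trans_le ((hy'.1.1 k).trans (hb k))) hz) (by linarith)) (fun i => ?_) (by omega)
    rcases eq_or_ne i k with rfl | hi
    exacts [Or.inr (by omega), Or.inl (le_of_add_single_eq_add_single hz hi)]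

/- Summed over the buyers, `utility q (y j) ≤ utility q (x · j)` by `hyx`, while termwise `≥`. -/
lemma Stable.of_le_of_sum_le {b : Ω → ℕ} {d : N → ℕ} {v : Ω → N → ℕ} {p q : Ω → ℝ}
    {x : Ω → N → ℕ} (hx : Stable b d v p x) (hqp : ∀ i, q i ≤ p i) (y : N → Ω → ℕ)
    (hy : ∀ j, InDemand b (d j) (fun i => v i j) q (y j))
    (hyx : ∀ i, q i < p i → ∑ j, y j i ≤ ∑ j, x i j) : Stable b d v q x := by
  have hle : ∀ j, utility (fun i => v i j) q (fun i => x i j) ≤ utility (fun i => v i j) q (y j) :=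
    fun j => (hy j).2 _ (hx.2 j).1
  have hcost : ∀ i, (p i - q i) * ∑ j, (y j i : ℝ) ≤ (p i - q i) * ∑ j, (x i j : ℝ) := fun i => by
    rcases (hqp i).lt_or_eq with h | h
    · exact mul_le_mul_of_nonneg_left (by exact_mod_cast hyx i h) (sub_nonneg.2 h.le)
    · simp [h]
  have hge : ∑ j, utility (fun i => v i j) q (y j)
      ≤ ∑ j, utility (fun i => v i j) q (fun i => x i j) := by
    simp only [utility_eq_add_sum_sub_mul _ p q, sum_add_distrib]
    refine add_le_add (sum_le_sum fun j _ => (hx.2 j).2 _ (hy j).1) ?_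
    rw [sum_comm, sum_comm (f := fun j i => (p i - q i) * (x i j : ℝ))]
    simpa only [mul_sum] using sum_le_sum fun i (_ : i ∈ univ) => hcost i
  have heq := (sum_eq_sum_iff_of_le fun j _ => hle j).1
    (le_antisymm (sum_le_sum fun j _ => hle j) hge)
  exact ⟨hx.1, fun j => (hy j).of_utility_le (hx.2 j).1 (heq j (mem_univ j)).ge⟩

end Monotonicity

/-- monotonicity of buyer-optimal Walrasian prices in the supply. -/
theorem min_walrasian_prices_monotone_in_supply
    {Ω N : Type*} [Fintype Ω] [Fintype N]
    (v : Ω → N → ℕ) (b bnew : Ω → ℕ) (d : N → ℕ)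
    (hb : ∀ i, bnew i ≤ b i)
    (p pnew : Ω → ℝ)
    (hp : MinWalrasian b d v p) (hpnew : MinWalrasian bnew d v pnew) :
    ∀ i, 0 < bnew i → p i ≤ pnew i := by
  classical
  obtain ⟨x, ⟨hx, hxsold⟩, hsoldout⟩ := hp.exists_walrasianAlloc_sold_out
  obtain ⟨hpnew₀, xnew, ⟨⟨hxnew_rows, -⟩, hxnew⟩, -⟩ := hpnew.1
  set q : Ω → ℝ := fun i => if 0 < bnew i then min (p i) (pnew i) else p i
  have hqp : ∀ i, q i ≤ p i := fun i => by by_cases hi : 0 < bnew i <;> simp [q, hi]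
  have hq : ∀ i, 0 < bnew i → q i ≤ pnew i := fun i hi => by simp [q, hi]
  choose y hy hyxnew using fun j => (hxnew j).exists_inDemand_le hb hq
  have hyx : ∀ i, q i < p i → ∑ j, y j i ≤ ∑ j, x i j := fun i hqi => by
    have hi : 0 < bnew i := by by_contra hi; simp [q, hi] at hqi
    have hqi' : q i = pnew i := by
      simp only [q, if_pos hi] at hqi ⊢
      exact min_eq_right ((min_lt_iff.1 hqi).resolve_left (lt_irrefl _)).le
    rw [hsoldout i ((hpnew₀ i).trans_lt (hqi' ▸ hqi))]
    exact sum_le_of_forall_lt_imp_le hi (hb i) (hxnew_rows i) (fun j => (hy j).1.1 i)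
      fun j => hyxnew j i hqi'
  have hqW : Walrasian b d v q :=
    ⟨fun i => by by_cases hi : 0 < bnew i <;> simp [q, hi, hp.1.1 i, hpnew₀ i],
      x, hx.of_le_of_sum_le hqp y hy hyx, hxsold⟩
  exact fun i hi => (hp.2 q hqW i).trans (hq i hi)
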